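/- arXiv:2510.22027 — 3 statements merged into one kernel-verified Lean document; each statement's English description precedes it below -/
import Mathlib

section
/- Let Λ ⊆ ℝ be a nonempty convex set, T a positive integer, ε_off ≥ 0 and R_T ∈ ℝ. Suppose D₁,…,D_T ∈ S and λ₁,…,λ_T ∈ Λ satisfy: (i) (offline-RL oracle error) for every t ∈ {1,…,T} and every D ∈ S, L(D, λ_t) ≤ L(D_t, λ_t) + ε_off; and (ii) (no-regret) for every λ ∈ Λ, ∑_{t=1}^T L(D_t, λ_t) ≤ ∑_{t=1}^T L(D_t, λ) + R_T. Set D̄ = (1/T)·∑_{t=1}^T D_t and λ̄ = (1/T)·∑_{t=1}^T λ_t. Then (D̄, λ̄) ∈ S × Λ is an ε-approximate minimax equilibrium with ε = ε_off + R_T/T; that is, L(D, λ̄) − ε ≤ L(D̄, λ̄) ≤ L(D̄, λ) + ε for all D ∈ S and all λ ∈ Λ. -/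
/-!
The Lagrangian is affine in each argument, so its value at an average of iterates is the average
of its values. Averaging the oracle inequality over `t` and then invoking the no-regret bound gives
`T⁻¹ ∑ₜ L(d, λₜ) ≤ T⁻¹ ∑ₜ L(Dₜ, λ) + ε` for every `d ∈ S` and `λ ∈ Λ`. Taking `λ = λ̄` yields the
left inequality and taking `d = D̄` the right one.
-/

open Finset

theorem Convex.inv_natCast_smul_sum_mem {E : Type*} [AddCommGroup E] [Module ℝ E] {s : Set E}
    (hs : Convex ℝ s) {T : ℕ} (hT : 0 < T) {x : Fin T → E} (hx : ∀ t, x t ∈ s) :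
    (T : ℝ)⁻¹ • ∑ t, x t ∈ s := by
  rw [smul_sum]
  exact hs.sum_mem (fun _ _ => by positivity) (by simp [hT.ne']) fun t _ => hx t

theorem AffineMap.map_inv_natCast_smul_sum {E F : Type*} [AddCommGroup E] [Module ℝ E]
    [AddCommGroup F] [Module ℝ F] (f : E →ᵃ[ℝ] F) {T : ℕ} (hT : 0 < T) (x : Fin T → E) :
    f ((T : ℝ)⁻¹ • ∑ t, x t) = (T : ℝ)⁻¹ • ∑ t, f (x t) := by
  obtain ⟨c, hc⟩ : ∃ c, ∀ y, f y = f.linear y + c :=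
    ⟨f 0, fun y => by rw [← sub_eq_iff_eq_add, ← vsub_eq_sub, ← f.linearMap_vsub]; simp⟩
  have hT' : (T : ℝ) ≠ 0 := by positivity
  simp only [hc, map_smul, map_sum, sum_add_distrib, sum_const, card_univ, Fintype.card_fin,
    smul_add, ← Nat.cast_smul_eq_nsmul ℝ, smul_smul, inv_mul_cancel₀ hT', one_smul]

theorem inv_natCast_mul_sum_le_of_le_add_of_sum_le {T : ℕ} (hT : 0 < T) {u v w : Fin T → ℝ}
    {ε R : ℝ} (huv : ∀ t, u t ≤ v t + ε) (hvw : ∑ t, v t ≤ ∑ t, w t + R) :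
    (T : ℝ)⁻¹ * ∑ t, u t ≤ (T : ℝ)⁻¹ * ∑ t, w t + (ε + R / T) := by
  have hT' : (0 : ℝ) < T := by exact_mod_cast hT
  have hu : ∑ t, u t ≤ ∑ t, w t + R + T * ε := by
    have := sum_le_sum fun t (_ : t ∈ univ) => huv t
    simp only [sum_add_distrib, sum_const, card_univ, Fintype.card_fin, nsmul_eq_mul] at this
    linarith
  calc (T : ℝ)⁻¹ * ∑ t, u t ≤ (T : ℝ)⁻¹ * (∑ t, w t + R + T * ε) := by gcongr
    _ = (T : ℝ)⁻¹ * ∑ t, w t + (ε + R / T) := by field_simp; ring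

section Lagrangian

variable {E : Type*} [AddCommGroup E] [Module ℝ E] (a b : E →ₗ[ℝ] ℝ) (κ : ℝ)

def lagrangian (d : E) (l : ℝ) : ℝ := a d - l * (b d - κ)

theorem lagrangian_inv_natCast_smul_sum_left {T : ℕ} (hT : 0 < T) (x : Fin T → E) (l : ℝ) :
    lagrangian a b κ ((T : ℝ)⁻¹ • ∑ t, x t) l = (T : ℝ)⁻¹ * ∑ t, lagrangian a b κ (x t) l := by
  let f : E →ᵃ[ℝ] ℝ := (a - l • b).toAffineMap + AffineMap.const ℝ E (l * κ)
  have hf (d : E) : f d = lagrangian a b κ d l := by simp [f, lagrangian]; ring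
  simpa only [hf, smul_eq_mul] using f.map_inv_natCast_smul_sum hT x

theorem lagrangian_inv_natCast_mul_sum_right {T : ℕ} (hT : 0 < T) (d : E) (x : Fin T → ℝ) :
    lagrangian a b κ d ((T : ℝ)⁻¹ * ∑ t, x t) = (T : ℝ)⁻¹ * ∑ t, lagrangian a b κ d (x t) := by
  let f : ℝ →ᵃ[ℝ] ℝ := AffineMap.const ℝ ℝ (a d) - (b d - κ) • AffineMap.id ℝ ℝ
  have hf (l : ℝ) : f l = lagrangian a b κ d l := by simp [f, lagrangian]; ring
  simpa only [hf, smul_eq_mul] using f.map_inv_natCast_smul_sum hT x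

end Lagrangian

theorem o3srl_approx_equilibrium_general
    {E : Type*} [AddCommGroup E] [Module ℝ E]
    (S : Set E) (hSconv : Convex ℝ S)
    (a b : E →ₗ[ℝ] ℝ) (κ : ℝ)
    (L : E → ℝ → ℝ) (hL : ∀ d lam, L d lam = a d - lam * (b d - κ))
    (Λ : Set ℝ) (hΛconv : Convex ℝ Λ)
    (T : ℕ) (hT : 0 < T)
    (εoff RT : ℝ)
    (D : Fin T → E) (hD : ∀ t, D t ∈ S)
    (lam : Fin T → ℝ) (hlam : ∀ t, lam t ∈ Λ)
    (horacle : ∀ t : Fin T, ∀ d ∈ S, L d (lam t) ≤ L (D t) (lam t) + εoff)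
    (hregret : ∀ l ∈ Λ, ∑ t, L (D t) (lam t) ≤ ∑ t, L (D t) l + RT)
    (Dbar : E) (hDbar : Dbar = ((T : ℝ))⁻¹ • ∑ t, D t)
    (lambar : ℝ) (hlambar : lambar = ((T : ℝ))⁻¹ * ∑ t, lam t) :
    Dbar ∈ S ∧ lambar ∈ Λ ∧
      ∀ d ∈ S, ∀ l ∈ Λ,
        L d lambar - (εoff + RT / T) ≤ L Dbar lambar ∧
        L Dbar lambar ≤ L Dbar l + (εoff + RT / T) := by
  obtain rfl : L = lagrangian a b κ := funext₂ hL
  have hDbarS : Dbar ∈ S := hDbar ▸ hSconv.inv_natCast_smul_sum_mem hT hD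
  have hlambarΛ : lambar ∈ Λ := by
    simpa only [hlambar, smul_eq_mul] using hΛconv.inv_natCast_smul_sum_mem hT hlam
  have hDbar_avg (l : ℝ) := hDbar ▸ lagrangian_inv_natCast_smul_sum_left a b κ hT D l
  have hlambar_avg (d : E) := hlambar ▸ lagrangian_inv_natCast_mul_sum_right a b κ hT d lam
  have average_bound {d : E} (hd : d ∈ S) {l : ℝ} (hl : l ∈ Λ) :=
    inv_natCast_mul_sum_le_of_le_add_of_sum_le hT (horacle · d hd) (hregret l hl)
  refine ⟨hDbarS, hlambarΛ, fun d hd l hl => ⟨?_, ?_⟩⟩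
  · rw [hlambar_avg, hDbar_avg]
    linarith [average_bound hd hlambarΛ]
  · rw [hlambar_avg, hDbar_avg]
    linarith [average_bound hDbarS hl]

/-- Convergence of the general O3SRL framework to an ε-approximate
minimax equilibrium, with ε = ε_off + R_T/T. -/
theorem o3srl_approx_equilibrium
    {E : Type*} [AddCommGroup E] [Module ℝ E]
    (S : Set E) (hS : S.Nonempty) (hSconv : Convex ℝ S)
    (a b : E →ₗ[ℝ] ℝ) (κ : ℝ)
    (L : E → ℝ → ℝ) (hL : ∀ d lam, L d lam = a d - lam * (b d - κ))
    (Λ : Set ℝ) (hΛ : Λ.Nonempty) (hΛconv : Convex ℝ Λ)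
    (T : ℕ) (hT : 0 < T)
    (εoff RT : ℝ) (hεoff : 0 ≤ εoff)
    (D : Fin T → E) (hD : ∀ t, D t ∈ S)
    (lam : Fin T → ℝ) (hlam : ∀ t, lam t ∈ Λ)
    (horacle : ∀ t : Fin T, ∀ d ∈ S, L d (lam t) ≤ L (D t) (lam t) + εoff)
    (hregret : ∀ l ∈ Λ, ∑ t, L (D t) (lam t) ≤ ∑ t, L (D t) l + RT)
    (Dbar : E) (hDbar : Dbar = ((T : ℝ))⁻¹ • ∑ t, D t)
    (lambar : ℝ) (hlambar : lambar = ((T : ℝ))⁻¹ * ∑ t, lam t) :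
    Dbar ∈ S ∧ lambar ∈ Λ ∧
      ∀ d ∈ S, ∀ l ∈ Λ,
        L d lambar - (εoff + RT / T) ≤ L Dbar lambar ∧
        L Dbar lambar ≤ L Dbar l + (εoff + RT / T) :=
  o3srl_approx_equilibrium_general S hSconv a b κ L hL Λ hΛconv T hT εoff RT D hD lam hlam horacle
    hregret Dbar hDbar lambar hlambar
end

section
/- Let Λ ⊆ ℝ be a nonempty convex set, T a positive integer, ε_off ≥ 0 and R_T ∈ ℝ. Suppose D₁,…,D_T ∈ S and λ₁,…,λ_T ∈ Λ satisfy: (i) for every t ∈ {1,…,T} and every D ∈ S, L(D, λ_t) ≤ L(D_t, λ_t) + ε_off; and (ii) for every λ ∈ Λ, ∑_{t=1}^T L(D_t, λ_t) ≤ ∑_{t=1}^T L(D_t, λ) + R_T. Set D̄ = (1/T)·∑_{t=1}^T D_t and λ̄ = (1/T)·∑_{t=1}^T λ_t. Then for every D ∈ S, L(D, λ̄) ≤ L(D̄, λ̄) + ε_off + R_T/T. -/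
/-!
The Lagrangian is affine in each argument, and averaging commutes with affine maps, so
`T · L(d, λ̄) = ∑ₜ L(d, λₜ)` and `T · L(D̄, λ̄) = ∑ₜ L(Dₜ, λ̄)`. Summing the oracle inequality
over `t` and then applying the regret bound at `λ̄ ∈ Λ` (a convex combination of the `λₜ`)
gives `T · L(d, λ̄) ≤ T · L(D̄, λ̄) + T ε_off + R_T`.
-/

open Finset

section Averaging

variable {ι E F : Type*} [AddCommGroup E] [Module ℝ E] [AddCommGroup F] [Module ℝ F]

theorem Convex.inv_card_smul_sum_mem {s : Set E} (hs : Convex ℝ s) {t : Finset ι}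
    (ht : t.Nonempty) {x : ι → E} (hx : ∀ i ∈ t, x i ∈ s) :
    (#t : ℝ)⁻¹ • ∑ i ∈ t, x i ∈ s := by
  simpa [centerMass] using
    hs.centerMass_mem (w := fun _ ↦ (1 : ℝ)) (fun _ _ ↦ zero_le_one) (by simpa using ht) hx

theorem AffineMap.sum_apply_eq_card_smul_apply_mean (f : E →ᵃ[ℝ] F) (t : Finset ι)
    (x : ι → E) : ∑ i ∈ t, f (x i) = #t • f ((#t : ℝ)⁻¹ • ∑ i ∈ t, x i) := by
  rcases t.eq_empty_or_nonempty with rfl | ht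
  · simp
  have hcard : (#t : ℝ) ≠ 0 := by exact_mod_cast ht.card_pos.ne'
  rw [f.decomp]
  simp only [Pi.add_apply, sum_add_distrib, ← map_sum, map_smul, sum_const, smul_add]
  rw [← Nat.cast_smul_eq_nsmul ℝ (#t), ← Nat.cast_smul_eq_nsmul ℝ (#t), smul_smul,
    mul_inv_cancel₀ hcard, one_smul]

end Averaging

section Lagrangian

variable {E : Type*} [AddCommGroup E] [Module ℝ E] (a b : E →ₗ[ℝ] ℝ) (κ : ℝ)

def lagrangianPrimal (l : ℝ) : E →ᵃ[ℝ] ℝ :=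
  (a - l • b).toAffineMap + AffineMap.const ℝ E (l * κ)

def lagrangianDual (d : E) : ℝ →ᵃ[ℝ] ℝ :=
  (-(b d - κ) • LinearMap.id).toAffineMap + AffineMap.const ℝ ℝ (a d)

theorem lagrangianPrimal_apply (l : ℝ) (d : E) :
    lagrangianPrimal a b κ l d = lagrangian a b κ d l := by
  simp only [lagrangianPrimal, lagrangian, AffineMap.coe_add, LinearMap.coe_toAffineMap,
    AffineMap.coe_const, Pi.add_apply, LinearMap.sub_apply, LinearMap.smul_apply, smul_eq_mul,
    Function.const_apply]
  ring

theorem lagrangianDual_apply (d : E) (l : ℝ) :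
    lagrangianDual a b κ d l = lagrangian a b κ d l := by
  simp only [lagrangianDual, lagrangian, AffineMap.coe_add, LinearMap.coe_toAffineMap,
    LinearMap.coe_smul, LinearMap.id_coe, AffineMap.coe_const, Pi.add_apply, Pi.smul_apply, id_eq,
    smul_eq_mul, Function.const_apply]
  ring

variable {ι : Type*} (t : Finset ι)

theorem sum_lagrangian_primal (x : ι → E) (l : ℝ) :
    ∑ i ∈ t, lagrangian a b κ (x i) l = #t * lagrangian a b κ ((#t : ℝ)⁻¹ • ∑ i ∈ t, x i) l := by
  simpa only [lagrangianPrimal_apply, nsmul_eq_mul] using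
    (lagrangianPrimal a b κ l).sum_apply_eq_card_smul_apply_mean t x

theorem sum_lagrangian_dual (d : E) (l : ι → ℝ) :
    ∑ i ∈ t, lagrangian a b κ d (l i) = #t * lagrangian a b κ d ((#t : ℝ)⁻¹ * ∑ i ∈ t, l i) := by
  simpa only [lagrangianDual_apply, nsmul_eq_mul, smul_eq_mul] using
    (lagrangianDual a b κ d).sum_apply_eq_card_smul_apply_mean t l

end Lagrangian

theorem o3srl_first_inequality_general
    {E : Type*} [AddCommGroup E] [Module ℝ E]
    (S : Set E)
    (a b : E →ₗ[ℝ] ℝ) (κ : ℝ)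
    (L : E → ℝ → ℝ) (hL : ∀ d lam, L d lam = a d - lam * (b d - κ))
    (Λ : Set ℝ) (hΛconv : Convex ℝ Λ)
    (T : ℕ) (hT : 0 < T)
    (εoff RT : ℝ)
    (D : Fin T → E)
    (lam : Fin T → ℝ) (hlam : ∀ t, lam t ∈ Λ)
    (horacle : ∀ t : Fin T, ∀ d ∈ S, L d (lam t) ≤ L (D t) (lam t) + εoff)
    (hregret : ∀ l ∈ Λ, ∑ t, L (D t) (lam t) ≤ ∑ t, L (D t) l + RT)
    (Dbar : E) (hDbar : Dbar = ((T : ℝ))⁻¹ • ∑ t, D t)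
    (lambar : ℝ) (hlambar : lambar = ((T : ℝ))⁻¹ * ∑ t, lam t) :
    ∀ d ∈ S, L d lambar ≤ L Dbar lambar + εoff + RT / T := by
  intro d hd
  obtain rfl : L = lagrangian a b κ := funext₂ hL
  have hTpos : (0 : ℝ) < T := by exact_mod_cast hT
  have hmem : lambar ∈ Λ := by
    simpa [hlambar] using hΛconv.inv_card_smul_sum_mem (univ_nonempty_iff.2 ⟨⟨0, hT⟩⟩)
      fun t _ ↦ hlam t
  refine le_of_mul_le_mul_left ?_ hTpos
  calc T * lagrangian a b κ d lambar = ∑ t, lagrangian a b κ d (lam t) := by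
        simpa [hlambar] using (sum_lagrangian_dual a b κ univ d lam).symm
    _ ≤ ∑ t, (lagrangian a b κ (D t) (lam t) + εoff) := sum_le_sum fun t _ ↦ horacle t d hd
    _ = ∑ t, lagrangian a b κ (D t) (lam t) + T * εoff := by simp [sum_add_distrib]
    _ ≤ ∑ t, lagrangian a b κ (D t) lambar + RT + T * εoff := by
        gcongr; exact hregret lambar hmem
    _ = T * (lagrangian a b κ Dbar lambar + εoff + RT / T) := by
        rw [hDbar]
        simp only [sum_lagrangian_primal, card_univ, Fintype.card_fin]
        field_simp
        ring

/-- First half of the O3SRL equilibrium guarantee: for every D ∈ S,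
L(D, λ̄) ≤ L(D̄, λ̄) + ε_off + R_T/T. -/
theorem o3srl_first_inequality
    {E : Type*} [AddCommGroup E] [Module ℝ E]
    (S : Set E) (hS : S.Nonempty) (hSconv : Convex ℝ S)
    (a b : E →ₗ[ℝ] ℝ) (κ : ℝ)
    (L : E → ℝ → ℝ) (hL : ∀ d lam, L d lam = a d - lam * (b d - κ))
    (Λ : Set ℝ) (hΛ : Λ.Nonempty) (hΛconv : Convex ℝ Λ)
    (T : ℕ) (hT : 0 < T)
    (εoff RT : ℝ) (hεoff : 0 ≤ εoff)
    (D : Fin T → E) (hD : ∀ t, D t ∈ S)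
    (lam : Fin T → ℝ) (hlam : ∀ t, lam t ∈ Λ)
    (horacle : ∀ t : Fin T, ∀ d ∈ S, L d (lam t) ≤ L (D t) (lam t) + εoff)
    (hregret : ∀ l ∈ Λ, ∑ t, L (D t) (lam t) ≤ ∑ t, L (D t) l + RT)
    (Dbar : E) (hDbar : Dbar = ((T : ℝ))⁻¹ • ∑ t, D t)
    (lambar : ℝ) (hlambar : lambar = ((T : ℝ))⁻¹ * ∑ t, lam t) :
    ∀ d ∈ S, L d lambar ≤ L Dbar lambar + εoff + RT / T :=
  o3srl_first_inequality_general S a b κ L hL Λ hΛconv T hT εoff RT D lam hlam horacle hregret Dbar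
    hDbar lambar hlambar
end

section
/- Let Λ ⊆ ℝ be a nonempty convex set, T a positive integer, ε_off ≥ 0 and R_T ∈ ℝ. Suppose D₁,…,D_T ∈ S and λ₁,…,λ_T ∈ Λ satisfy: (i) for every t ∈ {1,…,T} and every D ∈ S, L(D, λ_t) ≤ L(D_t, λ_t) + ε_off; and (ii) for every λ ∈ Λ, ∑_{t=1}^T L(D_t, λ_t) ≤ ∑_{t=1}^T L(D_t, λ) + R_T. Set D̄ = (1/T)·∑_{t=1}^T D_t and λ̄ = (1/T)·∑_{t=1}^T λ_t. Then for every λ ∈ Λ, L(D̄, λ) ≥ L(D̄, λ̄) − ε_off − R_T/T. -/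
/-!
`L` is affine in each argument, so averaging commutes with it: `T · L(D̄, μ) = ∑ₜ L(Dₜ, μ)` and
`T · L(D, λ̄) = ∑ₜ L(D, λₜ)`. Since `D̄ ∈ S` by convexity, summing the oracle inequality at `D̄`
and chaining it with the regret bound gives
`T · L(D̄, λ̄) = ∑ₜ L(D̄, λₜ) ≤ ∑ₜ L(Dₜ, λₜ) + T ε_off ≤ ∑ₜ L(Dₜ, λ) + R_T + T ε_off = T · L(D̄, λ) + R_T + T ε_off`.
-/

open Finset

theorem AffineMap.map_inv_card_smul_sum {k V W ι : Type*} [Field k] [CharZero k]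
    [AddCommGroup V] [Module k V] [AddCommGroup W] [Module k W] [Fintype ι] [Nonempty ι]
    (f : V →ᵃ[k] W) (x : ι → V) :
    f ((Fintype.card ι : k)⁻¹ • ∑ i, x i) = (Fintype.card ι : k)⁻¹ • ∑ i, f (x i) := by
  have hcard : (Fintype.card ι : k) ≠ 0 := Nat.cast_ne_zero.mpr Fintype.card_ne_zero
  rw [f.decomp]
  simp only [Pi.add_apply, map_smul, map_sum, sum_add_distrib, sum_const, card_univ, smul_add]
  rw [← Nat.cast_smul_eq_nsmul k, smul_smul, inv_mul_cancel₀ hcard, one_smul]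

theorem Convex.inv_card_smul_sum_mem_s2 {k V ι : Type*} [Field k] [LinearOrder k]
    [IsStrictOrderedRing k] [AddCommGroup V] [Module k V] [Fintype ι] [Nonempty ι]
    {S : Set V} (hS : Convex k S) {x : ι → V} (hx : ∀ i, x i ∈ S) :
    (Fintype.card ι : k)⁻¹ • ∑ i, x i ∈ S := by
  have hcard : (Fintype.card ι : k) ≠ 0 := Nat.cast_ne_zero.mpr Fintype.card_ne_zero
  rw [smul_sum]
  refine hS.sum_mem (fun _ _ => by positivity) ?_ fun i _ => hx i
  rw [sum_const, card_univ, nsmul_eq_mul, mul_inv_cancel₀ hcard]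

section Lagrangian

variable {E : Type*} [AddCommGroup E] [Module ℝ E] (a b : E →ₗ[ℝ] ℝ) (κ : ℝ)

def lagrangianInPolicy (μ : ℝ) : E →ᵃ[ℝ] ℝ where
  toFun d := a d - μ * (b d - κ)
  linear := a - μ • b
  map_vadd' d v := by
    simp only [vadd_eq_add, map_add, LinearMap.sub_apply, LinearMap.smul_apply, smul_eq_mul]
    ring

def lagrangianInMultiplier (d : E) : ℝ →ᵃ[ℝ] ℝ where
  toFun μ := a d - μ * (b d - κ)
  linear := -(b d - κ) • LinearMap.id
  map_vadd' μ ν := by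
    simp only [vadd_eq_add, LinearMap.smul_apply, LinearMap.id_apply, smul_eq_mul]
    ring

theorem lagrangianInPolicy_apply (μ : ℝ) (d : E) :
    lagrangianInPolicy a b κ μ d = a d - μ * (b d - κ) := rfl

theorem lagrangianInMultiplier_apply (d : E) (μ : ℝ) :
    lagrangianInMultiplier a b κ d μ = a d - μ * (b d - κ) := rfl

end Lagrangian

theorem o3srl_second_inequality_general
    {E : Type*} [AddCommGroup E] [Module ℝ E]
    (S : Set E) (hSconv : Convex ℝ S)
    (a b : E →ₗ[ℝ] ℝ) (κ : ℝ)
    (L : E → ℝ → ℝ) (hL : ∀ d lam, L d lam = a d - lam * (b d - κ))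
    (Λ : Set ℝ)
    (T : ℕ) (hT : 0 < T)
    (εoff RT : ℝ)
    (D : Fin T → E) (hD : ∀ t, D t ∈ S)
    (lam : Fin T → ℝ)
    (horacle : ∀ t : Fin T, ∀ d ∈ S, L d (lam t) ≤ L (D t) (lam t) + εoff)
    (hregret : ∀ l ∈ Λ, ∑ t, L (D t) (lam t) ≤ ∑ t, L (D t) l + RT)
    (Dbar : E) (hDbar : Dbar = ((T : ℝ))⁻¹ • ∑ t, D t)
    (lambar : ℝ) (hlambar : lambar = ((T : ℝ))⁻¹ * ∑ t, lam t) :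
    ∀ l ∈ Λ, L Dbar l ≥ L Dbar lambar - εoff - RT / T := by
  intro l hl
  have : Nonempty (Fin T) := ⟨⟨0, hT⟩⟩
  have hDbarS : Dbar ∈ S := by simpa [hDbar] using hSconv.inv_card_smul_sum_mem_s2 hD
  have average_policy : ∀ μ, L Dbar μ = (T : ℝ)⁻¹ * ∑ t, L (D t) μ := fun μ => by
    simpa only [hL, hDbar, lagrangianInPolicy_apply, Fintype.card_fin, smul_eq_mul] using
      (lagrangianInPolicy a b κ μ).map_inv_card_smul_sum D
  have average_multiplier : L Dbar lambar = (T : ℝ)⁻¹ * ∑ t, L Dbar (lam t) := by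
    simpa only [hL, hlambar, lagrangianInMultiplier_apply, Fintype.card_fin, smul_eq_mul] using
      (lagrangianInMultiplier a b κ Dbar).map_inv_card_smul_sum lam
  have oracle_sum : ∑ t, L Dbar (lam t) ≤ ∑ t, L (D t) (lam t) + T * εoff := by
    simpa [sum_add_distrib] using sum_le_sum fun t (_ : t ∈ univ) => horacle t Dbar hDbarS
  have hTpos : (0 : ℝ) < T := by exact_mod_cast hT
  have : L Dbar lambar ≤ L Dbar l + εoff + RT / T :=
    calc L Dbar lambar = (T : ℝ)⁻¹ * ∑ t, L Dbar (lam t) := average_multiplier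
      _ ≤ (T : ℝ)⁻¹ * (∑ t, L (D t) l + RT + T * εoff) := by
        gcongr; linarith [hregret l hl]
      _ = L Dbar l + εoff + RT / T := by
        rw [average_policy l]; field_simp; ring
  linarith

/-- Second half of the O3SRL equilibrium guarantee: for every λ ∈ Λ,
L(D̄, λ) ≥ L(D̄, λ̄) − ε_off − R_T/T. -/
theorem o3srl_second_inequality
    {E : Type*} [AddCommGroup E] [Module ℝ E]
    (S : Set E) (hS : S.Nonempty) (hSconv : Convex ℝ S)
    (a b : E →ₗ[ℝ] ℝ) (κ : ℝ)
    (L : E → ℝ → ℝ) (hL : ∀ d lam, L d lam = a d - lam * (b d - κ))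
    (Λ : Set ℝ) (hΛ : Λ.Nonempty) (hΛconv : Convex ℝ Λ)
    (T : ℕ) (hT : 0 < T)
    (εoff RT : ℝ) (hεoff : 0 ≤ εoff)
    (D : Fin T → E) (hD : ∀ t, D t ∈ S)
    (lam : Fin T → ℝ) (hlam : ∀ t, lam t ∈ Λ)
    (horacle : ∀ t : Fin T, ∀ d ∈ S, L d (lam t) ≤ L (D t) (lam t) + εoff)
    (hregret : ∀ l ∈ Λ, ∑ t, L (D t) (lam t) ≤ ∑ t, L (D t) l + RT)
    (Dbar : E) (hDbar : Dbar = ((T : ℝ))⁻¹ • ∑ t, D t)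
    (lambar : ℝ) (hlambar : lambar = ((T : ℝ))⁻¹ * ∑ t, lam t) :
    ∀ l ∈ Λ, L Dbar l ≥ L Dbar lambar - εoff - RT / T :=
  o3srl_second_inequality_general S hSconv a b κ L hL Λ T hT εoff RT D hD lam horacle hregret Dbar
    hDbar lambar hlambar
end
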